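/- For a partition λ, positive integers r, s, and each j ∈ ℤ/sℤ, the j-component of the s-quotient of the rs-core of λ equals the r-core of the j-component of the s-quotient of λ. -/

import Mathlib

open Classical

/-- A partition: an infinite weakly decreasing sequence of non-negative integers
with finite sum.  Here `f n` denotes the part `λ_{n+1}`. -/
structure LPartition where
  f : ℕ → ℕ
  antitone : ∀ ⦃m n : ℕ⦄, m ≤ n → f n ≤ f m
  eventually_zero : ∃ N, ∀ n, N ≤ n → f n = 0

instance : Inhabited LPartition :=
  ⟨⟨fun _ => 0, fun _ _ _ => le_rfl, ⟨0, fun _ _ => rfl⟩⟩⟩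

namespace LPartition

/-- The beta-set `β_r(λ) = {λ_i - i + r : i ≥ 1}`. -/
def beta (r : ℤ) (l : LPartition) : Set ℤ :=
  {x | ∃ n : ℕ, x = (l.f n : ℤ) - (n + 1) + r}

/-- The size `|λ|` of a partition. -/
noncomputable def size (l : LPartition) : ℕ := ∑ᶠ n, l.f n

/-- The partition whose beta-set (for some shift `r`) is `B`, if it exists. -/
noncomputable def ofBeta (B : Set ℤ) : LPartition :=
  if h : ∃ l : LPartition, ∃ r : ℤ, beta r l = B then h.choose else default

/-- The beta-set of the `s`-core: beads pushed up their runners as far as possible.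
A position `x` is occupied iff the number of beads of `B` weakly above it on its runner
exceeds the number of gaps strictly below it on its runner. -/
def coreBeta (s : ℕ) (B : Set ℤ) : Set ℤ :=
  {x | ({y : ℤ | y ∉ B ∧ y ≡ x [ZMOD (s : ℤ)] ∧ y < x}).ncard
      < ({b : ℤ | b ∈ B ∧ b ≡ x [ZMOD (s : ℤ)] ∧ x ≤ b}).ncard}

/-- The `s`-core of a partition. -/
noncomputable def core (s : ℕ) (l : LPartition) : LPartition :=
  ofBeta (coreBeta s (beta 0 l))

/-- `λ` is an `s`-core. -/
def IsCore (s : ℕ) (l : LPartition) : Prop := core s l = l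

/-- The `s`-weight of `λ`. -/
noncomputable def wt (s : ℕ) (l : LPartition) : ℕ := (size l - size (core s l)) / s

/-- The component of the `s`-quotient of `λ` indexed by `j : ZMod s`. -/
noncomputable def quot (s : ℕ) (l : LPartition) (j : ZMod s) : LPartition :=
  ofBeta {z : ℤ | ((j.val : ℤ) + (s : ℤ) * z) ∈ beta 0 l}

/-- The `s`-set entry `Γ_j(λ)`: the smallest integer in the class `j` mod `s`
not lying in the beta-set of the `s`-core of `λ`. -/
noncomputable def sSet (s : ℕ) (l : LPartition) (j : ZMod s) : ℤ :=
  sInf {x : ℤ | (x : ZMod s) = j ∧ x ∉ beta 0 (core s l)}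

/-- `λ` is an `[s:t]`-core. -/
def IsGenCore (s t : ℕ) (l : LPartition) : Prop :=
  wt s (core t l) = wt s l

/-- The level `t` action of the generator `w_i` of the affine symmetric group `W_s` on `ℤ`. -/
def genActZ (s t : ℕ) (i : ZMod s) (n : ℤ) : ℤ :=
  if (n : ZMod s) = (i - 1) * (t : ZMod s) - ((((s : ℤ) - 1) * ((t : ℤ) - 1) / 2 : ℤ) : ZMod s)
    then n + t
  else if (n : ZMod s) = i * (t : ZMod s) - ((((s : ℤ) - 1) * ((t : ℤ) - 1) / 2 : ℤ) : ZMod s)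
    then n - t
  else n

/-- The level `t` action of the generator `w_i` of `W_s` on partitions, via beta-sets. -/
noncomputable def genAct (s t : ℕ) (i : ZMod s) (l : LPartition) : LPartition :=
  ofBeta (genActZ s t i '' beta 0 l)

/-- The action of a word in the generators of `W_s`, at level `t`, on partitions. -/
noncomputable def wordAct (s t : ℕ) (w : List (ZMod s)) (l : LPartition) : LPartition :=
  w.foldr (genAct s t) l

/-- `λ` and `μ` lie in the same orbit for the level `t` action of `W_s`. -/
def SameOrbit (s t : ℕ) (l m : LPartition) : Prop :=
  ∃ w : List (ZMod s), wordAct s t w l = m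

/-- `λ` and `μ` lie in the same orbit for the commuting actions of `W_s` (level `t`)
and `W_t` (level `s`). -/
def SameOrbit2 (s t : ℕ) (l m : LPartition) : Prop :=
  ∃ a : List (ZMod s), ∃ b : List (ZMod t), wordAct s t a (wordAct t s b l) = m

/-- The `t`-weighted `s`-quotient of `λ`: the multiset of pairs
`(Γ_i(λ) + tℤ, λ^(i))` over `i ∈ ℤ/sℤ`. -/
noncomputable def twq (s t : ℕ) (l : LPartition) : Multiset (ZMod t × LPartition) :=
  ((List.range s).map (fun i =>
    (((sSet s l (i : ZMod s) : ℤ) : ZMod t), quot s l (i : ZMod s))) : Multiset _)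

/-- The largest `(s,t)`-core `κ_{s,t}`: the partition whose beta-set is the set of
integers not expressible as a non-negative integer combination of `s` and `t`. -/
noncomputable def kappa (s t : ℕ) : LPartition :=
  ofBeta {x : ℤ | ¬ ∃ a b : ℕ, x = (a : ℤ) * s + (b : ℤ) * t}

end LPartition

/-!
Pushing the beads of the `rs`-abacus up their runners is the same as pushing up the beads of the
`r`-abacus carried by each runner of the `s`-abacus, because `a + s z ≡ a + s w [ZMOD rs]` iff
`z ≡ w [ZMOD r]`. What remains is bookkeeping of charges: `core` and `quot` read a partition off a
beta-set only up to a shift, so one needs that `coreBeta t` preserves the charge. The charge of a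
beta-set is the sum of the charges of its `t` runners, and on a single runner the `1`-core is just
`Iio charge`, so the charge of each runner is unchanged.
-/

namespace LPartition

open Set

def IsBetaSet (B : Set ℤ) : Prop := (∃ N, Iio N ⊆ B) ∧ BddAbove B

lemma finite_inter_Ici {B : Set ℤ} (hB : BddAbove B) (N : ℤ) : (B ∩ Ici N).Finite :=
  (bddBelow_Ici.mono inter_subset_right).finite_of_bddAbove (hB.mono inter_subset_left)

lemma ncard_Ico_int (a b : ℤ) : (Ico a b).ncard = (b - a).toNat := by
  rw [← Finset.coe_Ico, ncard_coe_finset, Int.card_Ico]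

lemma ncard_inter_Ici_eq_add {B : Set ℤ} (hB : BddAbove B) {N N' : ℤ} (hle : N ≤ N') :
    (B ∩ Ici N).ncard = (B ∩ Ico N N').ncard + (B ∩ Ici N').ncard := by
  have hsplit : B ∩ Ici N = (B ∩ Ico N N') ∪ (B ∩ Ici N') := by
    rw [← inter_union_distrib_left, Ico_union_Ici_eq_Ici hle]
  have hdisj : Disjoint (B ∩ Ico N N') (B ∩ Ici N') :=
    disjoint_left.mpr fun x hx hx' => (not_le.mpr hx.2.2) hx'.2
  rw [hsplit, ncard_union_eq hdisj ((finite_Ico N N').inter_of_right B) (finite_inter_Ici hB N')]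

lemma add_ncard_inter_Ici_eq {B : Set ℤ} {N N' : ℤ} (hN' : Iio N' ⊆ B) (hB : BddAbove B)
    (hle : N ≤ N') : N + ((B ∩ Ici N).ncard : ℤ) = N' + (B ∩ Ici N').ncard := by
  rw [ncard_inter_Ici_eq_add hB hle, inter_eq_right.mpr (Ico_subset_Iio_self.trans hN'),
    ncard_Ico_int]
  omega

/-- `N + #(B ∩ Ici N)` for any `N` with `Iio N ⊆ B`; it does not depend on `N` (`charge_eq`). -/
noncomputable def charge (B : Set ℤ) : ℤ :=
  if h : ∃ N, Iio N ⊆ B then h.choose + (B ∩ Ici h.choose).ncard else 0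

lemma charge_eq {B : Set ℤ} {N : ℤ} (hN : Iio N ⊆ B) (hB : BddAbove B) :
    charge B = N + (B ∩ Ici N).ncard := by
  have h : ∃ N, Iio N ⊆ B := ⟨N, hN⟩
  rw [charge, dif_pos h]
  rcases le_total h.choose N with hle | hle
  · exact add_ncard_inter_Ici_eq hN hB hle
  · exact (add_ncard_inter_Ici_eq h.choose_spec hB hle).symm

lemma charge_Iio (c : ℤ) : charge (Iio c) = c := by
  rw [charge_eq subset_rfl bddAbove_Iio, Iio_inter_Ici, Ico_self, ncard_empty]
  simp

def betaSeq (ρ : ℤ) (m : LPartition) (n : ℕ) : ℤ := (m.f n : ℤ) - (n + 1) + ρ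

lemma beta_eq_range (ρ : ℤ) (m : LPartition) : beta ρ m = range (betaSeq ρ m) := by
  ext x
  simp only [beta, betaSeq, mem_ofPred_eq, mem_range, eq_comm]

lemma strictAnti_betaSeq (ρ : ℤ) (m : LPartition) : StrictAnti (betaSeq ρ m) := by
  refine strictAnti_nat_of_succ_lt fun n => ?_
  have := m.antitone (Nat.le_add_right n 1)
  simp only [betaSeq]
  push_cast
  omega

lemma betaSeq_of_le {m : LPartition} {N : ℕ} (hN : ∀ n, N ≤ n → m.f n = 0) (ρ : ℤ) {n : ℕ}
    (hn : N ≤ n) : betaSeq ρ m n = ρ - n - 1 := by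
  simp only [betaSeq, hN n hn]
  ring

lemma Iio_subset_beta {m : LPartition} {N : ℕ} (hN : ∀ n, N ≤ n → m.f n = 0) (ρ : ℤ) :
    Iio (ρ - N) ⊆ beta ρ m := fun x hx => by
  rw [beta_eq_range]
  refine ⟨(ρ - 1 - x).toNat, ?_⟩
  rw [betaSeq_of_le hN ρ (by simp only [mem_Iio] at hx; omega)]
  simp only [mem_Iio] at hx
  omega

lemma isBetaSet_beta (ρ : ℤ) (m : LPartition) : IsBetaSet (beta ρ m) := by
  obtain ⟨N, hN⟩ := m.eventually_zero
  refine ⟨⟨_, Iio_subset_beta hN ρ⟩, betaSeq ρ m 0, ?_⟩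
  rw [beta_eq_range]
  rintro _ ⟨n, rfl⟩
  exact (strictAnti_betaSeq ρ m).antitone n.zero_le

lemma charge_beta (ρ : ℤ) (m : LPartition) : charge (beta ρ m) = ρ := by
  obtain ⟨N, hN⟩ := m.eventually_zero
  have himage : beta ρ m ∩ Ici (ρ - N) = betaSeq ρ m '' Iio N := by
    rw [beta_eq_range]
    ext x
    simp only [mem_inter_iff, mem_range, mem_Ici, mem_image, mem_Iio]
    constructor
    · rintro ⟨⟨n, rfl⟩, hn⟩
      refine ⟨n, ?_, rfl⟩
      by_contra hle
      rw [betaSeq_of_le hN ρ (not_lt.mp hle)] at hn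
      omega
    · rintro ⟨n, hn, rfl⟩
      refine ⟨⟨n, rfl⟩, ?_⟩
      simp only [betaSeq]
      omega
  rw [charge_eq (Iio_subset_beta hN ρ) (isBetaSet_beta ρ m).2, himage,
    ncard_image_of_injective _ (strictAnti_betaSeq ρ m).injective, ncard_Iio_nat]
  ring

lemma nth_count_add_of_forall_ge {p : ℕ → Prop} [DecidablePred p] {K : ℕ}
    (hp : ∀ k, K ≤ k → p k) (j : ℕ) : Nat.nth p (Nat.count p K + j) = K + j := by
  have hcount : Nat.count p (K + j) = Nat.count p K + j := by
    rw [Nat.count_add, Nat.count_of_forall fun k _ => hp (K + k) (by omega)]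
  rw [← hcount, Nat.nth_count (hp _ (by omega))]

/-- Enumerate `B` downwards as `b n = M - nth p n`, where `p k ↔ M - k ∈ B`; the sequence
`b n + n` is antitone and becomes constant once `b n` is below the first gap. -/
lemma IsBetaSet.exists_beta_eq {B : Set ℤ} (hB : IsBetaSet B) : ∃ ρ m, beta ρ m = B := by
  obtain ⟨⟨N, hN⟩, M, hM⟩ := hB
  set p : ℕ → Prop := fun k => M - k ∈ B
  set K : ℕ := (M - N + 1).toNat
  have hpK : ∀ k, K ≤ k → p k := fun k hk => hN (by simp only [mem_Iio]; omega)
  have hinf : (Set.ofPred p).Infinite :=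
    infinite_of_forall_exists_gt fun a => ⟨max a K + 1, hpK _ (by omega), by omega⟩
  have hmono := Nat.nth_strictMono hinf
  set c := Nat.count p K with hc
  set g : ℕ → ℤ := fun n => M - Nat.nth p n + n
  have hg : Antitone g := fun a b hab => by
    obtain ⟨d, rfl⟩ := Nat.exists_eq_add_of_le hab
    have := hmono.add_le_nat d a
    simp only [g]
    rw [add_comm a d]
    push_cast
    omega
  have hgc : ∀ n, c ≤ n → g n = M - K + c := fun n hn => by
    obtain ⟨j, rfl⟩ := Nat.exists_eq_add_of_le hn
    simp only [g, hc, nth_count_add_of_forall_ge hpK]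
    push_cast
    ring
  have hge : ∀ n, M - K + c ≤ g n := fun n =>
    (hgc (max n c) (le_max_right n c)).symm.le.trans (hg (le_max_left n c))
  refine ⟨M - K + c + 1,
    ⟨fun n => (g n - (M - K + c)).toNat, fun a b hab => by have := hg hab; omega,
      c, fun n hn => by simp [hgc n hn]⟩, ?_⟩
  ext x
  simp only [beta, mem_ofPred_eq]
  constructor
  · rintro ⟨n, rfl⟩
    have hx : M - Nat.nth p n ∈ B := Nat.nth_mem_of_infinite hinf n
    convert hx using 1
    have hgn := hge n
    simp only [g] at hgn ⊢
    omega
  · intro hx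
    obtain ⟨n, hn⟩ : (M - x).toNat ∈ range (Nat.nth p) := by
      rw [Nat.range_nth_of_infinite hinf]
      show M - ((M - x).toNat : ℕ) ∈ B
      rwa [Int.toNat_of_nonneg (by linarith [hM hx]), sub_sub_cancel]
    refine ⟨n, ?_⟩
    have hgn := hge n
    have hxM := hM hx
    simp only [g, hn] at hgn ⊢
    omega

lemma IsBetaSet.exists_beta_charge_eq {B : Set ℤ} (hB : IsBetaSet B) :
    ∃ m, beta (charge B) m = B := by
  obtain ⟨ρ, m, rfl⟩ := hB.exists_beta_eq
  exact ⟨m, by rw [charge_beta]⟩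

lemma beta_injective (ρ : ℤ) : Function.Injective (beta ρ) := fun m m' h => by
  rw [beta_eq_range, beta_eq_range] at h
  have hf := ((strictAnti_betaSeq ρ m).neg.range_inj (strictAnti_betaSeq ρ m').neg).mp <| by
    rw [range_comp' (- ·) (betaSeq ρ m), range_comp' (- ·) (betaSeq ρ m'), h]
  cases m; cases m'
  congr
  funext n
  have := congrFun hf n
  simp only [betaSeq, neg_inj] at this
  omega

lemma ofBeta_beta (ρ : ℤ) (m : LPartition) : ofBeta (beta ρ m) = m := by
  have h : ∃ l : LPartition, ∃ r : ℤ, beta r l = beta ρ m := ⟨m, ρ, rfl⟩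
  rw [ofBeta, dif_pos h]
  obtain ⟨r, hr⟩ := h.choose_spec
  obtain rfl : r = ρ := by rw [← charge_beta r h.choose, hr, charge_beta]
  exact beta_injective r hr

def runner (t : ℕ) (a : ℤ) (B : Set ℤ) : Set ℤ := {m | a + (t : ℤ) * m ∈ B}

lemma modEq_mul_iff_exists {r s : ℕ} (hs : 0 < s) (a y z : ℤ) :
    y ≡ a + s * z [ZMOD (r * s : ℕ)] ↔ ∃ w, y = a + s * w ∧ w ≡ z [ZMOD r] := by
  have hs' : (s : ℤ) ≠ 0 := by exact_mod_cast hs.ne'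
  have hcast : ((r * s : ℕ) : ℤ) = s * r := by push_cast; ring
  rw [hcast]
  constructor
  · intro hy
    obtain ⟨d, hd⟩ := (Int.ModEq.of_mul_right r hy).dvd
    have hyw : y = a + s * (z - d) := by linear_combination -hd
    rw [hyw] at hy
    exact ⟨z - d, hyw, Int.ModEq.mul_left_cancel' hs' (Int.ModEq.add_left_cancel' a hy)⟩
  · rintro ⟨w, rfl, hw⟩
    exact (hw.mul_left' (c := s)).add_left a

lemma setOf_modEq_mul_eq_image {r s : ℕ} (hs : 0 < s) (P Q : ℤ → Prop) (a z : ℤ) :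
    {y | P y ∧ y ≡ a + s * z [ZMOD (r * s : ℕ)] ∧ Q y} =
      (fun w => a + s * w) '' {w | P (a + s * w) ∧ w ≡ z [ZMOD r] ∧ Q (a + s * w)} := by
  ext y
  simp only [mem_ofPred_eq, mem_image, modEq_mul_iff_exists hs]
  constructor
  · rintro ⟨hP, ⟨w, rfl, hw⟩, hQ⟩
    exact ⟨w, ⟨hP, hw, hQ⟩, rfl⟩
  · rintro ⟨w, ⟨hP, hw, hQ⟩, rfl⟩
    exact ⟨hP, ⟨w, rfl, hw⟩, hQ⟩

/-- `a + s * z` and `a + s * w` lie on the same runner of the `rs`-abacus iff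
`z ≡ w [ZMOD r]`, and `z ↦ a + s * z` preserves order, so gaps and beads are counted alike. -/
lemma runner_coreBeta_mul {s : ℕ} (hs : 0 < s) (r : ℕ) (a : ℤ) (B : Set ℤ) :
    runner s a (coreBeta (r * s) B) = coreBeta r (runner s a B) := by
  have hs' : (0 : ℤ) < s := by exact_mod_cast hs
  have hinj : Function.Injective (fun w : ℤ => a + s * w) := fun u v h =>
    mul_left_cancel₀ hs'.ne' (add_left_cancel h)
  ext z
  simp only [runner, coreBeta, mem_ofPred_eq]
  rw [setOf_modEq_mul_eq_image hs (· ∉ B), setOf_modEq_mul_eq_image hs (· ∈ B),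
    ncard_image_of_injective _ hinj, ncard_image_of_injective _ hinj]
  simp only [add_lt_add_iff_left, add_le_add_iff_left, mul_lt_mul_iff_right₀ hs',
    mul_le_mul_iff_right₀ hs']

lemma IsBetaSet.runner {B : Set ℤ} (hB : IsBetaSet B) {s : ℕ} (hs : 0 < s) (a : ℤ) :
    IsBetaSet (runner s a B) := by
  obtain ⟨⟨N, hN⟩, M, hM⟩ := hB
  have hs1 : (1 : ℤ) ≤ s := by exact_mod_cast hs
  refine ⟨⟨min (N - a) 0, fun m hm => hN ?_⟩, max (M - a) 0, fun m hm => ?_⟩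
  · simp only [mem_Iio, lt_min_iff] at hm ⊢
    nlinarith
  · have := hM hm
    simp only [le_max_iff]
    by_contra! h
    nlinarith

lemma beta_eq_runner_one (c : ℤ) (m : LPartition) : beta c m = runner 1 (-c) (beta 0 m) := by
  ext x
  simp only [beta, runner, mem_ofPred_eq, Nat.cast_one, one_mul]
  constructor <;> rintro ⟨n, hn⟩ <;> exact ⟨n, by omega⟩

lemma IsBetaSet.coreBeta {B : Set ℤ} (hB : IsBetaSet B) (t : ℕ) : IsBetaSet (coreBeta t B) := by
  obtain ⟨⟨N, hN⟩, M, hM⟩ := hB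
  refine ⟨⟨N, fun x hx => ?_⟩, M, fun x hx => ?_⟩
  · have hgaps : {y | y ∉ B ∧ y ≡ x [ZMOD t] ∧ y < x} = ∅ :=
      eq_empty_of_forall_notMem fun y hy => hy.1 (hN (lt_trans hy.2.2 hx))
    have hfin : {b | b ∈ B ∧ b ≡ x [ZMOD t] ∧ x ≤ b}.Finite :=
      (finite_Icc x M).subset fun b hb => ⟨hb.2.2, hM hb.1⟩
    rw [LPartition.coreBeta, mem_ofPred_eq, hgaps, ncard_empty, ncard_pos hfin]
    exact ⟨x, hN hx, Int.ModEq.refl x, le_rfl⟩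
  · rw [LPartition.coreBeta, mem_ofPred_eq] at hx
    obtain ⟨b, hb, -, hxb⟩ := nonempty_of_ncard_ne_zero (Nat.zero_lt_of_lt hx).ne'
    exact hxb.trans (hM hb)

lemma coreBeta_zero (B : Set ℤ) : coreBeta 0 B = B := by
  ext x
  simp only [coreBeta, mem_ofPred_eq, Nat.cast_zero, Int.modEq_zero_iff]
  have hgaps : {y | y ∉ B ∧ y = x ∧ y < x} = ∅ :=
    eq_empty_of_forall_notMem fun y hy => hy.2.2.ne hy.2.1
  have hbeads : {b | b ∈ B ∧ b = x ∧ x ≤ b} = B ∩ {x} := by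
    ext b
    simp only [mem_ofPred_eq, mem_inter_iff, mem_singleton_iff]
    constructor
    · rintro ⟨hb, rfl, -⟩
      exact ⟨hb, rfl⟩
    · rintro ⟨hb, rfl⟩
      exact ⟨hb, rfl, le_rfl⟩
  rw [hgaps, hbeads, ncard_empty, ncard_pos ((finite_singleton x).inter_of_right B)]
  simp

lemma coreBeta_one {A : Set ℤ} (hA : IsBetaSet A) : coreBeta 1 A = Iio (charge A) := by
  obtain ⟨⟨N, hN⟩, hbdd⟩ := hA
  ext x
  simp only [coreBeta, mem_ofPred_eq, Nat.cast_one, Int.modEq_one, true_and, mem_Iio,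
    charge_eq hN hbdd]
  have hfin := finite_inter_Ici hbdd x
  change _ < (A ∩ Ici x).ncard ↔ _
  rcases lt_or_ge x N with hx | hx
  · have hgaps : {y | y ∉ A ∧ y < x} = ∅ :=
      eq_empty_of_forall_notMem fun y hy => hy.1 (hN (lt_trans hy.2 hx))
    have hbeads : 0 < (A ∩ Ici x).ncard := (ncard_pos hfin).mpr ⟨x, hN hx, self_mem_Ici⟩
    rw [hgaps, ncard_empty]
    simp only [hbeads, true_iff]
    omega
  · have hgaps : {y | y ∉ A ∧ y < x} = Ico N x \ A := by
      ext y
      simp only [mem_ofPred_eq, mem_sdiff, mem_Ico]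
      constructor
      · rintro ⟨hy, hyx⟩
        exact ⟨⟨not_lt.mp fun h => hy (hN h), hyx⟩, hy⟩
      · rintro ⟨⟨-, hyx⟩, hy⟩
        exact ⟨hy, hyx⟩
    have hIco := ncard_inter_add_ncard_sdiff_eq_ncard (Ico N x) A (finite_Ico N x)
    rw [hgaps, ncard_inter_Ici_eq_add hbdd hx, inter_comm, ncard_Ico_int] at *
    omega

lemma runner_Iio_mul {t : ℕ} {i : ℤ} (hi : 0 ≤ i) (hit : i < t) (N : ℤ) :
    runner t i (Iio (t * N)) = Iio N := by
  ext m
  simp only [runner, mem_ofPred_eq, mem_Iio]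
  constructor
  · intro h
    by_contra! hm
    nlinarith
  · intro hm
    nlinarith

lemma runner_Ici_mul {t : ℕ} {i : ℤ} (hi : 0 ≤ i) (hit : i < t) (N : ℤ) :
    runner t i (Ici (t * N)) = Ici N := by
  rw [← compl_Iio, ← compl_Iio]
  exact congrArg compl (runner_Iio_mul hi hit N)

lemma runner_mono {t : ℕ} {a : ℤ} {B C : Set ℤ} (h : B ⊆ C) : runner t a B ⊆ runner t a C :=
  fun _ hm => h hm

lemma ncard_eq_sum_ncard_runner {t : ℕ} (ht : 0 < t) {S : Set ℤ} (hS : S.Finite) :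
    S.ncard = ∑ i ∈ Finset.range t, (runner t i S).ncard := by
  have ht' : (0 : ℤ) < t := by exact_mod_cast ht
  have hfiber : ∀ i ∈ Finset.range t, (runner t i S).ncard =
      (hS.toFinset.filter fun x : ℤ => (x % (t : ℤ)).toNat = i).card := fun i hi => by
    have hi' : (i : ℤ) < t := by exact_mod_cast Finset.mem_range.mp hi
    rw [← ncard_image_of_injective _ fun u v h => mul_left_cancel₀ ht'.ne' (add_left_cancel h),
      ← ncard_coe_finset]
    congr 1
    ext x
    simp only [runner, mem_image, mem_ofPred_eq, Finset.coe_filter, hS.mem_toFinset]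
    constructor
    · rintro ⟨m, hm, rfl⟩
      refine ⟨hm, ?_⟩
      rw [Int.add_mul_emod_self_left, Int.emod_eq_of_lt (by omega) hi']
      simp
    · rintro ⟨hx, hxi⟩
      have hdiv : (i : ℤ) + t * (x / t) = x := by
        rw [← hxi, Int.toNat_of_nonneg (Int.emod_nonneg x ht'.ne'), Int.emod_add_mul_ediv]
      exact ⟨x / t, by rwa [hdiv], hdiv⟩
  rw [Finset.sum_congr rfl hfiber, ← Finset.card_eq_sum_card_fiberwise, ncard_eq_toFinset_card S hS]
  intro x _
  simp only [Finset.coe_range, mem_Iio]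
  have := Int.emod_lt_of_pos x ht'
  omega

lemma charge_eq_sum_charge_runner {t : ℕ} (ht : 0 < t) {B : Set ℤ} (hB : IsBetaSet B) :
    charge B = ∑ i ∈ Finset.range t, charge (runner t i B) := by
  obtain ⟨N, hN⟩ := hB.1
  have ht' : (1 : ℤ) ≤ t := by exact_mod_cast ht
  have hle : t * -|N| ≤ N := by
    nlinarith [mul_le_mul_of_nonpos_right ht' (neg_nonpos.mpr (abs_nonneg N)), neg_abs_le N]
  have hN₁ : Iio (t * -|N|) ⊆ B := (Iio_subset_Iio hle).trans hN
  have hrunner : ∀ i ∈ Finset.range t, charge (runner t i B) =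
      -|N| + (runner t i (B ∩ Ici (t * -|N|))).ncard := fun i hi => by
    have hi' : (i : ℤ) < t := by exact_mod_cast Finset.mem_range.mp hi
    have hi0 : (0 : ℤ) ≤ i := Int.natCast_nonneg i
    rw [charge_eq ((runner_Iio_mul hi0 hi' _).symm.subset.trans (runner_mono hN₁))
      (hB.runner ht i).2, ← runner_Ici_mul hi0 hi']
    rfl
  rw [Finset.sum_congr rfl hrunner, Finset.sum_add_distrib, charge_eq hN₁ hB.2,
    ncard_eq_sum_ncard_runner ht (finite_inter_Ici hB.2 _)]
  simp

lemma charge_coreBeta {B : Set ℤ} (hB : IsBetaSet B) (t : ℕ) :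
    charge (coreBeta t B) = charge B := by
  rcases Nat.eq_zero_or_pos t with rfl | ht
  · rw [coreBeta_zero]
  rw [charge_eq_sum_charge_runner ht (hB.coreBeta t), charge_eq_sum_charge_runner ht hB]
  refine Finset.sum_congr rfl fun i _ => ?_
  have hcore : coreBeta t B = coreBeta (1 * t) B := by rw [one_mul]
  rw [hcore, runner_coreBeta_mul ht, coreBeta_one (hB.runner ht i), charge_Iio]

lemma beta_core (t : ℕ) (l : LPartition) : beta 0 (core t l) = coreBeta t (beta 0 l) := by
  have hC := (isBetaSet_beta 0 l).coreBeta t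
  obtain ⟨m, hm⟩ := hC.exists_beta_charge_eq
  rw [charge_coreBeta (isBetaSet_beta 0 l), charge_beta] at hm
  rw [core, ← hm, ofBeta_beta]

lemma coreBeta_beta (t : ℕ) (c : ℤ) (m : LPartition) :
    coreBeta t (beta c m) = beta c (core t m) := by
  rw [beta_eq_runner_one, beta_eq_runner_one c (core t m), beta_core, ← runner_coreBeta_mul one_pos,
    mul_one]

lemma exists_beta_quot {s : ℕ} (hs : 0 < s) (l : LPartition) (j : ZMod s) :
    ∃ c, beta c (quot s l j) = runner s j.val (beta 0 l) := by
  obtain ⟨m, hm⟩ := ((isBetaSet_beta 0 l).runner hs j.val).exists_beta_charge_eq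
  exact ⟨_, by rw [quot, ← runner, ← hm, ofBeta_beta, hm]⟩

end LPartition

open LPartition in
theorem quot_core_mul_general (r s : ℕ) (hs : 0 < s) (l : LPartition) (j : ZMod s) :
    quot s (core (r * s) l) j = core r (quot s l j) := by
  obtain ⟨c, hc⟩ := exists_beta_quot hs l j
  calc quot s (core (r * s) l) j
      = ofBeta (runner s j.val (coreBeta (r * s) (beta 0 l))) := by rw [← beta_core]; rfl
    _ = ofBeta (beta c (core r (quot s l j))) := by
      rw [runner_coreBeta_mul hs, ← hc, coreBeta_beta]
    _ = core r (quot s l j) := ofBeta_beta c _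

open LPartition in
/-- Each component of the `s`-quotient of the `rs`-core of `λ` is the `r`-core of the
corresponding component of the `s`-quotient of `λ`. -/
theorem quot_core_mul (r s : ℕ) (hr : 0 < r) (hs : 0 < s) (l : LPartition) (j : ZMod s) :
    quot s (core (r * s) l) j = core r (quot s l j) :=
  quot_core_mul_general r s hs l j
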